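/- arXiv:1310.4625 — 7 statements merged into one kernel-verified Lean document; each statement's English description precedes it below -/
import Mathlib

section
/- Let A be an abelian group and let φ and ψ be inertial endomorphisms of A. Then φ + ψ and φ ∘ ψ are inertial endomorphisms of A; moreover every endomorphism of A whose image is finite is inertial. (Hence the inertial endomorphisms form a subring IE(A) of the endomorphism ring of A, containing the ideal F(A) of endomorphisms with finite image.) -/
/-!
For a subgroup `X`, the subgroup `X + (φ + ψ)(X)` lies in `(X + φ(X)) + (X + ψ(X))`, and
`X + φ(ψ(X))` lies in `Y + φ(Y)` with `Y = X + ψ(X)`. Finite relative index is transitive and,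
in an abelian group, survives passing from `K ⊇ X` and `L` to `K + L`, since
`[K + L : K] = [L : K ∩ L]` divides `[L : X ∩ L]`. If `χ` has finite image then
`[X + χ(X) : X] = [χ(X) : X ∩ χ(X)]` is finite.
-/

/-- An endomorphism `φ` of an abelian group `A` is *inertial* (RIN) if every subgroup `X`
of `A` has finite index in `X + φ(X)`. -/
def IsInertial {A : Type*} [AddCommGroup A] (φ : A →+ A) : Prop :=
  ∀ X : AddSubgroup A, X.relIndex (X ⊔ X.map φ) ≠ 0

namespace AddSubgroup

variable {G : Type*} [AddGroup G]

lemma relIndex_ne_zero_of_le_right {H K L : AddSubgroup G} (hKL : K ≤ L)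
    (hHL : H.relIndex L ≠ 0) : H.relIndex K ≠ 0 :=
  mt (relIndex_eq_zero_of_le_right hKL) hHL

lemma relIndex_sup_ne_zero {H K L : AddSubgroup G} [K.Normal] (hHK : H ≤ K)
    (hK : H.relIndex K ≠ 0) (hL : H.relIndex L ≠ 0) : H.relIndex (K ⊔ L) ≠ 0 :=
  relIndex_ne_zero_trans hK <| by
    rw [relIndex_sup_left]
    exact mt (relIndex_eq_zero_of_le_left hHK) hL

lemma relIndex_ne_zero_of_finite (H : AddSubgroup G) {K : AddSubgroup G} [Finite K] :
    H.relIndex K ≠ 0 :=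
  ne_zero_of_dvd_ne_zero Nat.card_pos.ne' (relIndex_dvd_card H K)

lemma map_add_le {A : Type*} [AddCommGroup A] (H : AddSubgroup G) (f g : G →+ A) :
    H.map (f + g) ≤ H.map f ⊔ H.map g := by
  rintro _ ⟨x, hx, rfl⟩
  exact add_mem (mem_sup_left (mem_map_of_mem f hx)) (mem_sup_right (mem_map_of_mem g hx))

end AddSubgroup

section

open AddSubgroup

variable {A : Type*} [AddCommGroup A]

theorem IsInertial.add {φ ψ : A →+ A} (hφ : IsInertial φ) (hψ : IsInertial ψ) :
    IsInertial (φ + ψ) := fun X ↦ by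
  have hle : X ⊔ X.map (φ + ψ) ≤ (X ⊔ X.map φ) ⊔ (X ⊔ X.map ψ) :=
    sup_le (le_sup_left.trans le_sup_left)
      ((X.map_add_le φ ψ).trans (sup_le_sup le_sup_right le_sup_right))
  exact relIndex_ne_zero_of_le_right hle (relIndex_sup_ne_zero le_sup_left (hφ X) (hψ X))

theorem IsInertial.comp {φ ψ : A →+ A} (hφ : IsInertial φ) (hψ : IsInertial ψ) :
    IsInertial (φ.comp ψ) := fun X ↦ by
  set Y := X ⊔ X.map ψ
  have hle : X ⊔ X.map (φ.comp ψ) ≤ Y ⊔ Y.map φ := by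
    rw [← map_map]
    exact sup_le_sup (le_sup_left : X ≤ Y) (map_mono le_sup_right)
  exact relIndex_ne_zero_of_le_right hle (relIndex_ne_zero_trans (hψ X) (hφ Y))

theorem isInertial_of_finite_range {χ : A →+ A} (hχ : (Set.range χ).Finite) :
    IsInertial χ := fun X ↦ by
  have : Finite (X.map χ) := hχ.subset (Set.image_subset_range χ X)
  rw [relIndex_sup_left]
  exact X.relIndex_ne_zero_of_finite

end

/-- Sums and composites of inertial endomorphisms are inertial, and any endomorphism with
finite image is inertial. -/
theorem stmt_0 {A : Type*} [AddCommGroup A] (φ ψ : A →+ A)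
    (hφ : IsInertial φ) (hψ : IsInertial ψ) :
    IsInertial (φ + ψ) ∧ IsInertial (φ.comp ψ) ∧
      ∀ χ : A →+ A, (Set.range χ).Finite → IsInertial χ :=
  ⟨hφ.add hψ, hφ.comp hψ, fun _ ↦ isInertial_of_finite_range⟩
end

section
/- There exists a countable abelian group A of torsion-free rank 1 (i.e. ℚ ⊗_ℤ A is a 1-dimensional ℚ-vector space) such that the subgroup IAut(A) of Aut(A) generated by the inertial automorphisms of A contains a subgroup Σ isomorphic to the direct product ∏_p ℤ/pℤ over all primes p, with Σ ∩ FAut(A) equal to the torsion subgroup of Σ, which is isomorphic to the direct sum ⊕_p ℤ/pℤ over all primes p. -/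
open scoped TensorProduct

/-- An automorphism of an abelian group `A` is *finitary* if it agrees with the identity
on some subgroup of finite index of `A`. -/
def IsFinitary {A : Type*} [AddCommGroup A] (ψ : AddAut A) : Prop :=
  ∃ B : AddSubgroup A, B.index ≠ 0 ∧ ∀ a ∈ B, ψ a = a

/-- `A` is countable, has torsion-free rank `1`, and the subgroup `IAut(A)` of `Aut(A)`
generated by the inertial automorphisms contains a subgroup `S ≅ ∏_p ℤ/pℤ` whose
intersection with `FAut(A)` is its torsion subgroup, which corresponds under the
isomorphism to the finitely supported elements, i.e. to `⊕_p ℤ/pℤ`. -/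
def Stmt6Prop (A : Type) [AddCommGroup A] : Prop :=
  Countable A ∧ Module.finrank ℚ (ℚ ⊗[ℤ] A) = 1 ∧
  ∃ S : AddSubgroup (AddAut A),
    S ≤ AddSubgroup.closure {ψ : AddAut A | IsInertial ψ.toAddMonoidHom} ∧
    ∃ e : ↥S ≃+ (∀ p : Nat.Primes, ZMod (p : ℕ)),
      (∀ g : ↥S, IsFinitary (g : AddAut A) ↔ IsOfFinAddOrder (g : AddAut A)) ∧
      (∀ g : ↥S, IsOfFinAddOrder (g : AddAut A) ↔ {p : Nat.Primes | e g p ≠ 0}.Finite)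

/-!
Take `A = ℤ ⊕ ⊕_p ℤ/p²` and, for `c ∈ ∏_p ℤ/p`, let `φ_c` fix `ℤ` and multiply the `p`-component
by the unit `1 + p c_p` of `ℤ/p²`. By the Chinese remainder theorem `φ_c` acts on each element of
the torsion part `⊕_p ℤ/p²` as multiplication by an integer, and it moves every element by a
torsion element. As `A` modulo its torsion part is cyclic, every subgroup `X` is generated by
`X ∩ ⊕_p ℤ/p²`, which `φ_c` preserves, and one element `x₀`; hence
`X + φ_c(X) ⊆ X + ⟨φ_c(x₀) - x₀⟩`, a finite extension of `X`, and `φ_c` is inertial.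
The map `c ↦ φ_c` is an injective homomorphism, `φ_c` has finite order iff `c` has finite
support, and if `φ_c` fixes a subgroup of finite index `n` then every `p` with `c_p ≠ 0`
divides `n`.
-/

section TorsionFreeRank

variable {D : Type*} [AddCommGroup D]

theorem subsingleton_rat_tensor_of_isAddTorsion (hD : IsAddTorsion D) :
    Subsingleton (ℚ ⊗[ℤ] D) := by
  refine subsingleton_of_forall_eq 0 fun x => ?_
  induction x using TensorProduct.induction_on with
  | zero => rfl
  | tmul q d =>
    obtain ⟨m, hm, hmd⟩ := (hD d).exists_nsmul_eq_zero
    have hq : q = (m : ℤ) • ((m : ℚ)⁻¹ * q) := by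
      rw [zsmul_eq_mul]
      push_cast
      field_simp
    rw [hq, TensorProduct.smul_tmul, natCast_zsmul, hmd, TensorProduct.tmul_zero]
  | add x y hx hy => rw [hx, hy, add_zero]

theorem finrank_rat_tensor_int_prod_of_isAddTorsion (hD : IsAddTorsion D) :
    Module.finrank ℚ (ℚ ⊗[ℤ] (ℤ × D)) = 1 := by
  have := subsingleton_rat_tensor_of_isAddTorsion hD
  have : Unique (ℚ ⊗[ℤ] D) := uniqueOfSubsingleton 0
  let e := (TensorProduct.prodRight ℤ ℚ ℚ ℤ D).trans
    (LinearEquiv.prodUnique.trans (TensorProduct.AlgebraTensorModule.rid ℤ ℚ ℚ))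
  rw [e.finrank_eq, Module.finrank_self]

end TorsionFreeRank

theorem DFinsupp.isAddTorsion {ι : Type*} {G : ι → Type*} [∀ i, AddCommGroup (G i)]
    (hG : ∀ i, IsAddTorsion (G i)) : IsAddTorsion (Π₀ i, G i) := by
  classical
  intro f
  induction f using DFinsupp.induction with
  | h0 => exact IsOfFinAddOrder.zero
  | ha i g f _ _ ih => exact ((DFinsupp.singleAddHom G i).isOfFinAddOrder (hG i g)).add ih

theorem ZMod.exists_natCast_eq_of_pairwise_coprime {ι : Type*} {n : ι → ℕ} [∀ i, NeZero (n i)]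
    (hn : Pairwise fun i j => Nat.Coprime (n i) (n j)) (w : ∀ i, ZMod (n i)) (s : Finset ι) :
    ∃ N : ℕ, ∀ i ∈ s, (N : ZMod (n i)) = w i := by
  obtain ⟨N, hN⟩ := Nat.chineseRemainderOfFinset (fun i => (w i).val) n s
    (fun i _ => NeZero.ne _) (hn.set_pairwise _)
  exact ⟨N, fun i hi => by
    rw [(ZMod.natCast_eq_natCast_iff _ _ _).mpr (hN i hi), ZMod.natCast_zmod_val]⟩

theorem AddSubgroup.relIndex_sup_zmultiples_ne_zero {A : Type*} [AddCommGroup A]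
    (X : AddSubgroup A) {a : A} (ha : IsOfFinAddOrder a) :
    X.relIndex (X ⊔ AddSubgroup.zmultiples a) ≠ 0 := by
  have : Finite (AddSubgroup.zmultiples a) := ha.finite_zmultiples.to_subtype
  rw [AddSubgroup.relIndex_sup_left]
  exact AddSubgroup.index_ne_zero_of_finite

theorem isInertial_of_fst_eq_of_exists_nsmul {D : Type*} [AddCommGroup D] (hD : IsAddTorsion D)
    (φ : ℤ × D →+ ℤ × D) (hfst : ∀ x, (φ x).1 = x.1)
    (hpow : ∀ d : D, ∃ N : ℕ, φ (0, d) = N • (0, d)) : IsInertial φ := by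
  intro X
  obtain ⟨g, hg⟩ := Int.subgroup_cyclic (X.map (AddMonoidHom.fst ℤ D))
  rw [← AddSubgroup.zmultiples_eq_closure] at hg
  obtain ⟨x₀, hx₀, rfl⟩ : g ∈ X.map (AddMonoidHom.fst ℤ D) :=
    hg ▸ AddSubgroup.mem_zmultiples g
  set a := φ x₀ - x₀
  have ha : IsOfFinAddOrder a := by
    have ha_eq : a = (0, a.2) := Prod.ext (by simp [a, hfst]) rfl
    rw [ha_eq]
    exact (AddMonoidHom.inr ℤ D).isOfFinAddOrder (hD a.2)
  have hmap : X.map φ ≤ X ⊔ AddSubgroup.zmultiples a := by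
    rintro _ ⟨x, hx, rfl⟩
    obtain ⟨k, hk⟩ : ∃ k : ℤ, k • x₀.1 = x.1 := by
      have hx1 : x.1 ∈ X.map (AddMonoidHom.fst ℤ D) := ⟨x, hx, rfl⟩
      rwa [hg, AddSubgroup.mem_zmultiples_iff] at hx1
    -- `x - k • x₀` lies in `X ∩ D`, where `φ` is a power map
    obtain ⟨N, hN⟩ := hpow (x - k • x₀).2
    have hy : ((0 : ℤ), (x - k • x₀).2) = x - k • x₀ :=
      Prod.ext (sub_eq_zero.mpr hk.symm).symm rfl
    rw [hy] at hN
    have hφx : φ x = N • (x - k • x₀) + k • (x₀ + a) := by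
      rw [← hN, map_sub, map_zsmul]
      simp only [a, smul_add, smul_sub]
      abel
    rw [hφx]
    exact add_mem (AddSubgroup.mem_sup_left (nsmul_mem (sub_mem hx (zsmul_mem hx₀ k)) N))
      (zsmul_mem (add_mem (AddSubgroup.mem_sup_left hx₀)
        (AddSubgroup.mem_sup_right (AddSubgroup.mem_zmultiples a))) k)
  exact fun h0 => X.relIndex_sup_zmultiples_ne_zero ha
    (AddSubgroup.relIndex_eq_zero_of_le_right (sup_le le_sup_left hmap) h0)

namespace ZMod

variable (p : ℕ)

def pMul : ZMod p →+ ZMod (p ^ 2) :=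
  ZMod.lift p ⟨(AddMonoidHom.mulLeft (p : ZMod (p ^ 2))).comp (Int.castAddHom _), by
    simp [← sq, ← Nat.cast_pow]⟩

theorem pMul_intCast (k : ℤ) : pMul p k = p * k :=
  ZMod.lift_coe p _ k

theorem pMul_mul_pMul (a b : ZMod p) : pMul p a * pMul p b = 0 := by
  obtain ⟨i, rfl⟩ := ZMod.intCast_surjective a
  obtain ⟨j, rfl⟩ := ZMod.intCast_surjective b
  rw [pMul_intCast, pMul_intCast, mul_mul_mul_comm, ← sq, ← Nat.cast_pow, ZMod.natCast_self,
    zero_mul]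

theorem pMul_injective [NeZero p] : Function.Injective (pMul p) := by
  refine (injective_iff_map_eq_zero _).mpr fun a ha => ?_
  obtain ⟨i, rfl⟩ := ZMod.intCast_surjective a
  rw [pMul_intCast] at ha
  rw [ZMod.intCast_zmod_eq_zero_iff_dvd]
  have : ((p ^ 2 : ℕ) : ℤ) ∣ p * i := by
    rw [← ZMod.intCast_zmod_eq_zero_iff_dvd]
    push_cast
    exact ha
  rwa [Nat.cast_pow, sq, Int.mul_dvd_mul_iff_left (by exact_mod_cast NeZero.ne p)] at this

def oneAddPMul (c : ZMod p) : (ZMod (p ^ 2))ˣ where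
  val := 1 + pMul p c
  inv := 1 - pMul p c
  val_inv := by linear_combination -pMul_mul_pMul p c c
  inv_val := by linear_combination -pMul_mul_pMul p c c

end ZMod

namespace Nat.Primes

instance fact_prime (p : Nat.Primes) : Fact (p : ℕ).Prime := ⟨p.2⟩

theorem finite_setOf_dvd {n : ℕ} (hn : n ≠ 0) : {p : Nat.Primes | (p : ℕ) ∣ n}.Finite :=
  (n.divisors.finite_toSet.preimage Subtype.coe_injective.injOn).subset
    fun _ hp => Nat.mem_divisors.mpr ⟨hp, hn⟩

theorem finite_setOf_ne_zero_of_nsmul_eq_zero {c : ∀ p : Nat.Primes, ZMod p} {n : ℕ}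
    (hn : n ≠ 0) (h : ∀ p, n • c p = 0) : {p | c p ≠ 0}.Finite :=
  (finite_setOf_dvd hn).subset fun p hp => by
    simpa [addOrderOf_eq_prime (p := p) (by simp) hp] using addOrderOf_dvd_of_nsmul_eq_zero (h p)

theorem isOfFinAddOrder_pi_zmod_iff (c : ∀ p : Nat.Primes, ZMod p) :
    IsOfFinAddOrder c ↔ {p | c p ≠ 0}.Finite := by
  refine ⟨fun hc => ?_, fun hF => ?_⟩
  · obtain ⟨n, hn, hnc⟩ := hc.exists_nsmul_eq_zero
    exact finite_setOf_ne_zero_of_nsmul_eq_zero hn.ne' fun p => congrFun hnc p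
  · refine isOfFinAddOrder_iff_nsmul_eq_zero.mpr ⟨∏ p ∈ hF.toFinset, (p : ℕ),
      Finset.prod_pos fun p _ => p.2.pos, funext fun p => ?_⟩
    by_cases hp : c p = 0
    · simp [hp]
    · obtain ⟨k, hk⟩ := Finset.dvd_prod_of_mem (fun p : Nat.Primes => (p : ℕ))
        (hF.mem_toFinset.mpr hp)
      simp [hk]

end Nat.Primes

abbrev PrimeSquareSum : Type := Π₀ p : Nat.Primes, ZMod ((p : ℕ) ^ 2)

namespace PrimeSquareSum

theorem isAddTorsion : IsAddTorsion PrimeSquareSum :=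
  DFinsupp.isAddTorsion fun _ => isOfFinAddOrder_of_finite

def oneAddPMulAut : (∀ p : Nat.Primes, ZMod p) →+ AddAut (ℤ × PrimeSquareSum) where
  toFun c := (AddEquiv.refl ℤ).prodCongr <| DFinsupp.mapRange.addEquiv fun p =>
    Multiplicative.toAdd (AddAut.mulLeft (ZMod.oneAddPMul p (c p)))
  map_zero' := by
    ext x p
    · rfl
    · show (1 + ZMod.pMul p 0) * x.2 p = x.2 p
      rw [map_zero, add_zero, one_mul]
  map_add' c d := by
    ext x p
    · rfl
    · show (1 + ZMod.pMul p (c p + d p)) * x.2 p =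
        (1 + ZMod.pMul p (c p)) * ((1 + ZMod.pMul p (d p)) * x.2 p)
      rw [map_add]
      linear_combination -x.2 p * ZMod.pMul_mul_pMul _ (c p) (d p)

@[simp]
theorem oneAddPMulAut_apply_fst (c : ∀ p : Nat.Primes, ZMod p) (x : ℤ × PrimeSquareSum) :
    (oneAddPMulAut c x).1 = x.1 :=
  rfl

@[simp]
theorem oneAddPMulAut_apply_snd_apply (c : ∀ p : Nat.Primes, ZMod p) (x : ℤ × PrimeSquareSum)
    (p : Nat.Primes) : (oneAddPMulAut c x).2 p = (1 + ZMod.pMul p (c p)) * x.2 p :=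
  rfl

theorem oneAddPMulAut_injective : Function.Injective oneAddPMulAut := by
  intro c d hcd
  funext p
  have hp := congrArg (fun φ : AddAut (ℤ × PrimeSquareSum) => (φ (0, DFinsupp.single p 1)).2 p) hcd
  exact ZMod.pMul_injective p (by simpa using hp)

theorem exists_oneAddPMulAut_eq_nsmul (c : ∀ p : Nat.Primes, ZMod p) (d : PrimeSquareSum) :
    ∃ N : ℕ, oneAddPMulAut c (0, d) = N • (0, d) := by
  have hcop : Pairwise fun p q : Nat.Primes => Nat.Coprime ((p : ℕ) ^ 2) ((q : ℕ) ^ 2) :=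
    fun p q hpq => ((Nat.coprime_primes p.2 q.2).mpr (Subtype.coe_injective.ne hpq)).pow _ _
  obtain ⟨N, hN⟩ := ZMod.exists_natCast_eq_of_pairwise_coprime hcop
    (fun p => 1 + ZMod.pMul p (c p)) d.support
  refine ⟨N, Prod.ext (by simp) (DFinsupp.ext fun p => ?_)⟩
  by_cases hp : p ∈ d.support
  · simp [hN p hp, nsmul_eq_mul]
  · simp [DFinsupp.notMem_support_iff.mp hp]

theorem isInertial_oneAddPMulAut (c : ∀ p : Nat.Primes, ZMod p) :
    IsInertial (oneAddPMulAut c).toAddMonoidHom :=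
  isInertial_of_fst_eq_of_exists_nsmul isAddTorsion _ (fun _ => rfl)
    (exists_oneAddPMulAut_eq_nsmul c)

theorem isFinitary_oneAddPMulAut_iff (c : ∀ p : Nat.Primes, ZMod p) :
    IsFinitary (oneAddPMulAut c) ↔ {p | c p ≠ 0}.Finite := by
  refine ⟨fun ⟨B, hB, hfix⟩ => ?_, fun hF => ?_⟩
  · refine Nat.Primes.finite_setOf_ne_zero_of_nsmul_eq_zero hB fun p =>
      ZMod.pMul_injective p ?_
    have hp := congrArg (fun x => x.2 p) (hfix _ (B.nsmul_index_mem (0, DFinsupp.single p 1)))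
    simp only [Prod.smul_mk, oneAddPMulAut_apply_snd_apply, DFinsupp.coe_smul, Pi.smul_apply,
      DFinsupp.single_eq_same, nsmul_eq_mul, mul_one] at hp
    rw [map_nsmul, map_zero, nsmul_eq_mul]
    linear_combination hp
  · let ρ : ℤ × PrimeSquareSum →+ ∀ p : hF.toFinset, ZMod ((p : ℕ) ^ 2) :=
      AddMonoidHom.pi fun p =>
        (DFinsupp.evalAddMonoidHom (p : Nat.Primes)).comp (AddMonoidHom.snd _ _)
    refine ⟨ρ.ker, AddSubgroup.FiniteIndex.index_ne_zero, fun x hx => ?_⟩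
    refine Prod.ext rfl (DFinsupp.ext fun p => ?_)
    by_cases hp : c p = 0
    · simp [hp]
    · have hxp : x.2 p = 0 := congrFun hx ⟨p, hF.mem_toFinset.mpr hp⟩
      simp [hxp]

end PrimeSquareSum

/-- There exists a countable abelian group of torsion-free rank `1` with the properties
described in `Stmt6Prop`. -/
theorem stmt_6 : ∃ (A : Type) (inst : AddCommGroup A), @Stmt6Prop A inst := by
  let e := AddMonoidHom.ofInjective PrimeSquareSum.oneAddPMulAut_injective
  have hfin (c : ∀ p : Nat.Primes, ZMod p) :
      IsOfFinAddOrder (PrimeSquareSum.oneAddPMulAut c) ↔ {p | c p ≠ 0}.Finite :=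
    PrimeSquareSum.oneAddPMulAut_injective.isOfFinAddOrder_iff.trans
      (Nat.Primes.isOfFinAddOrder_pi_zmod_iff c)
  refine ⟨ℤ × PrimeSquareSum, inferInstance, inferInstance,
    finrank_rat_tensor_int_prod_of_isAddTorsion PrimeSquareSum.isAddTorsion,
    PrimeSquareSum.oneAddPMulAut.range, ?_, e.symm, fun g => ?_, fun g => ?_⟩
  · rintro _ ⟨c, rfl⟩
    exact AddSubgroup.subset_closure (PrimeSquareSum.isInertial_oneAddPMulAut c)
  all_goals
    obtain ⟨c, rfl⟩ := e.surjective g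
    simp only [e, AddEquiv.symm_apply_apply, AddMonoidHom.ofInjective_apply]
  · rw [PrimeSquareSum.isFinitary_oneAddPMulAut_iff, hfin]
  · exact hfin c
end

section
/- Let A be an abelian group of infinite torsion-free rank (i.e. ℚ ⊗_ℤ A is an infinite-dimensional ℚ-vector space), let m and n be coprime integers with n ≠ 0 such that multiplication by n is bijective on A, and let φ be the endomorphism of A determined by n•φ(a) = m•a for all a ∈ A. Then φ is LIN if and only if m = 1 or m = −1. -/
open scoped TensorProduct

/-!
If `m = ±1` then `φ` is invertible with inverse `a ↦ (m * n) • a`, so `φ` maps every subgroup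
onto a supergroup of itself. Conversely, infinite torsion-free rank provides an infinite
independent family `a`; in its span `X` the finiteness of `X / (X ∩ φ X)` forces
`a j - a i = φ y` for some `i ≠ j` and `y ∈ X`, and comparing `j`-coordinates in
`n • (a j - a i) = m • y` shows `m ∣ n`, hence `m` is a unit by coprimality.
-/

/-- An endomorphism `φ` of an abelian group `A` is *LIN* if for every subgroup `X`
of `A`, the intersection `X ∩ φ(X)` has finite index in `X`. -/
def IsLIN {A : Type*} [AddCommGroup A] (φ : A →+ A) : Prop :=
  ∀ X : AddSubgroup A, (X.map φ).relIndex X ≠ 0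

section LIN

variable {A : Type*} [AddCommGroup A] {φ : A →+ A}

theorem isLIN_of_apply_zsmul_eq_self {k : ℤ} (hk : ∀ x, φ (k • x) = x) : IsLIN φ := by
  intro X
  have hle : X ≤ X.map φ := fun x hx => ⟨k • x, X.zsmul_mem hx k, hk x⟩
  rw [← AddSubgroup.inf_relIndex_right, inf_eq_right.mpr hle, AddSubgroup.relIndex_self]
  exact one_ne_zero

theorem IsLIN.exists_sub_mem_map (h : IsLIN φ) {ι : Type*} [Infinite ι] {X : AddSubgroup A}
    {a : ι → A} (ha : ∀ i, a i ∈ X) : ∃ i j, i ≠ j ∧ a j - a i ∈ X.map φ := by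
  have : Finite (X ⧸ (X.map φ).addSubgroupOf X) := (Nat.card_ne_zero.mp (h X)).2
  obtain ⟨i, j, hij, hq⟩ := Finite.exists_ne_map_eq_of_infinite
    fun i => ((⟨a i, ha i⟩ : X) : X ⧸ (X.map φ).addSubgroupOf X)
  rw [QuotientAddGroup.eq, AddSubgroup.mem_addSubgroupOf] at hq
  exact ⟨i, j, hij, by simpa [neg_add_eq_sub] using hq⟩

theorem IsLIN.dvd_of_linearIndependent (h : IsLIN φ) {m n : ℤ} (hφ : ∀ a, n • φ a = m • a)
    {ι : Type*} [Infinite ι] {a : ι → A} (ha : LinearIndependent ℤ a) : m ∣ n := by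
  let X := (Submodule.span ℤ (Set.range a)).toAddSubgroup
  obtain ⟨i, j, hij, y, hy, hφy⟩ :=
    h.exists_sub_mem_map (X := X) fun i => Submodule.subset_span (Set.mem_range_self i)
  obtain ⟨c, rfl⟩ := Finsupp.mem_span_range_iff_exists_finsupp.mp hy
  have hcoeff : n • (Finsupp.single j 1 - Finsupp.single i 1) = m • c := by
    apply ha
    rw [map_smul, map_smul, map_sub, Finsupp.linearCombination_single,
      Finsupp.linearCombination_single, one_smul, one_smul, ← hφy, hφ,
      Finsupp.linearCombination_apply]
  refine ⟨c j, ?_⟩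
  simpa [Finsupp.single_apply, hij] using DFunLike.congr_fun hcoeff j

end LIN

theorem exists_linearIndependent_nat_of_not_finiteDimensional {A : Type*} [AddCommGroup A]
    (hA : ¬ FiniteDimensional ℚ (ℚ ⊗[ℤ] A)) : ∃ a : ℕ → A, LinearIndependent ℤ a := by
  let b := Module.Free.chooseBasis ℚ (ℚ ⊗[ℤ] A)
  have : Infinite (Module.Free.ChooseBasisIndex ℚ (ℚ ⊗[ℤ] A)) :=
    not_finite_iff_infinite.mp fun _ => hA (Module.Finite.of_basis b)
  let e := Infinite.natEmbedding (Module.Free.ChooseBasisIndex ℚ (ℚ ⊗[ℤ] A))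
  exact IsLocalizedModule.linearIndependent_lift (nonZeroDivisors ℤ) (TensorProduct.mk ℤ ℚ A 1)
    ((b.linearIndependent.comp e e.injective).restrict_scalars' ℤ)

theorem stmt_9_general {A : Type*} [AddCommGroup A]
    (hA : ¬ FiniteDimensional ℚ (ℚ ⊗[ℤ] A)) (m n : ℤ)
    (hmn : IsCoprime m n)
    (hbij : Function.Bijective fun a : A => n • a)
    (φ : A →+ A) (hφ : ∀ a : A, n • φ a = m • a) :
    IsLIN φ ↔ (m = 1 ∨ m = -1) := by
  constructor
  · intro hLIN
    obtain ⟨a, ha⟩ := exists_linearIndependent_nat_of_not_finiteDimensional hA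
    exact Int.isUnit_iff.mp (hmn.isUnit_of_dvd' dvd_rfl (hLIN.dvd_of_linearIndependent hφ ha))
  · intro hm
    have hmm : m * m = 1 := by rcases hm with rfl | rfl <;> norm_num
    refine isLIN_of_apply_zsmul_eq_self (k := m * n) fun x => hbij.1 ?_
    change n • φ ((m * n) • x) = n • x
    rw [hφ, smul_smul, ← mul_assoc, hmm, one_mul]

/-- On an abelian group of infinite torsion-free rank, multiplication by `m/n` is LIN
iff `m = 1` or `m = -1`. -/
theorem stmt_9 {A : Type*} [AddCommGroup A]
    (hA : ¬ FiniteDimensional ℚ (ℚ ⊗[ℤ] A)) (m n : ℤ)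
    (hmn : IsCoprime m n) (hn : n ≠ 0)
    (hbij : Function.Bijective fun a : A => n • a)
    (φ : A →+ A) (hφ : ∀ a : A, n • φ a = m • a) :
    IsLIN φ ↔ (m = 1 ∨ m = -1) :=
  stmt_9_general hA m n hmn hbij φ hφ
end

section
/- Let A be an abelian group and φ an endomorphism of A. (1) If A₀ is a subgroup of finite index in A with φ(A₀) ⊆ A₀ and the restriction of φ to A₀ is inertial (resp. LIN), then φ is inertial (resp. LIN) on A. (2) If F is a finite subgroup of A with φ(F) ⊆ F and the endomorphism induced by φ on A/F is inertial (resp. LIN), then φ is inertial (resp. LIN) on A. -/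
/-!
For abelian groups, `X` has finite index in `X + φ(X)` iff `X ∩ φ(X)` has finite index in
`φ(X)`, so inertial and LIN are the two halves of "`X` and `φ(X)` are commensurable".
Both properties descend along a homomorphism `f` semiconjugating `ψ` to `φ`. If the range
of `f` has finite index, each `X` contains the finite-index subgroup `f(f⁻¹(X))`, on which
`φ` is controlled by `ψ`. If the kernel of `f` is finite, finiteness of indices can be
pulled back along `f`, because enlarging a subgroup by a finite one only changes it up to
finite index.
-/

open AddSubgroup

namespace AddSubgroup

section AddGroup

variable {G G' : Type*} [AddGroup G] [AddGroup G']

theorem relIndex_map_ne_zero (f : G →+ G') {H K : AddSubgroup G} (h : H.relIndex K ≠ 0) :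
    (H.map f).relIndex (K.map f) ≠ 0 := by
  rw [← relIndex_comap]
  exact mt (relIndex_eq_zero_of_le_left (le_comap_map f H)) h

theorem map_map_of_semiconj {f : G →+ G'} {φ : G →+ G} {ψ : G' →+ G'}
    (h : Function.Semiconj f φ ψ) (H : AddSubgroup G) :
    (H.map φ).map f = (H.map f).map ψ := by
  rw [map_map, map_map]
  exact congrArg H.map (AddMonoidHom.ext h)

theorem relIndex_map_comap_ne_zero (f : G' →+ G) (hf : f.range.index ≠ 0) (X : AddSubgroup G) :
    ((X.comap f).map f).relIndex X ≠ 0 := by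
  rw [map_comap_eq, inf_relIndex_right]
  exact mt index_eq_zero_of_relIndex_eq_zero hf

variable {X Y : AddSubgroup G} (φ : G →+ G)

theorem relIndex_self_map_ne_zero_of_le (hYX : Y ≤ X) (hY : Y.relIndex X ≠ 0)
    (h : Y.relIndex (Y.map φ) ≠ 0) : X.relIndex (X.map φ) ≠ 0 :=
  relIndex_ne_zero_trans (mt (relIndex_eq_zero_of_le_left hYX) h) (relIndex_map_ne_zero φ hY)

theorem relIndex_map_self_ne_zero_of_le (hYX : Y ≤ X) (hY : Y.relIndex X ≠ 0)
    (h : (Y.map φ).relIndex Y ≠ 0) : (X.map φ).relIndex X ≠ 0 :=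
  mt (relIndex_eq_zero_of_le_left (map_mono hYX)) (relIndex_ne_zero_trans h hY)

end AddGroup

theorem relIndex_ne_zero_of_map_of_finite_ker {G G' : Type*} [AddCommGroup G] [AddGroup G']
    (f : G →+ G') (hf : (f.ker : Set G).Finite) {H K : AddSubgroup G}
    (h : (H.map f).relIndex (K.map f) ≠ 0) : H.relIndex K ≠ 0 := by
  rw [← relIndex_comap, comap_map_eq] at h
  refine relIndex_ne_zero_trans ?_ h
  have : Finite f.ker := hf.to_subtype
  rw [relIndex_sup_left]
  exact index_ne_zero_of_finite

end AddSubgroup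

theorem isInertial_iff_relIndex_map_ne_zero {A : Type*} [AddCommGroup A] (φ : A →+ A) :
    IsInertial φ ↔ ∀ X : AddSubgroup A, X.relIndex (X.map φ) ≠ 0 := by
  simp only [IsInertial, relIndex_sup_left]

section Descent

variable {A B : Type*} [AddCommGroup A] [AddCommGroup B] {φ : A →+ A} {ψ : B →+ B}

theorem IsInertial.of_semiconj_of_index_range_ne_zero (f : B →+ A) (hf : f.range.index ≠ 0)
    (hfψ : Function.Semiconj f ψ φ) (hψ : IsInertial ψ) : IsInertial φ := by
  rw [isInertial_iff_relIndex_map_ne_zero] at hψ ⊢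
  intro X
  refine relIndex_self_map_ne_zero_of_le φ (map_comap_le f X)
    (relIndex_map_comap_ne_zero f hf X) ?_
  rw [← map_map_of_semiconj hfψ]
  exact relIndex_map_ne_zero f (hψ _)

theorem IsLIN.of_semiconj_of_index_range_ne_zero (f : B →+ A) (hf : f.range.index ≠ 0)
    (hfψ : Function.Semiconj f ψ φ) (hψ : IsLIN ψ) : IsLIN φ := by
  intro X
  refine relIndex_map_self_ne_zero_of_le φ (map_comap_le f X)
    (relIndex_map_comap_ne_zero f hf X) ?_
  rw [← map_map_of_semiconj hfψ]
  exact relIndex_map_ne_zero f (hψ _)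

theorem IsInertial.of_semiconj_of_finite_ker (f : A →+ B) (hf : (f.ker : Set A).Finite)
    (hfφ : Function.Semiconj f φ ψ) (hψ : IsInertial ψ) : IsInertial φ := by
  rw [isInertial_iff_relIndex_map_ne_zero] at hψ ⊢
  intro X
  apply relIndex_ne_zero_of_map_of_finite_ker f hf
  rw [map_map_of_semiconj hfφ]
  exact hψ _

theorem IsLIN.of_semiconj_of_finite_ker (f : A →+ B) (hf : (f.ker : Set A).Finite)
    (hfφ : Function.Semiconj f φ ψ) (hψ : IsLIN ψ) : IsLIN φ := by
  intro X
  apply relIndex_ne_zero_of_map_of_finite_ker f hf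
  rw [map_map_of_semiconj hfφ]
  exact hψ _

end Descent

/-- If `φ` acts as an inertial (resp. LIN) endomorphism on a subgroup of finite index,
or modulo a finite invariant subgroup, then `φ` is inertial (resp. LIN) on `A`. -/
theorem stmt_11 {A : Type*} [AddCommGroup A] (φ : A →+ A) :
    (∀ A₀ : AddSubgroup A, A₀.index ≠ 0 →
      ∀ ψ : ↥A₀ →+ ↥A₀, (∀ a : ↥A₀, (ψ a : A) = φ a) →
        (IsInertial ψ → IsInertial φ) ∧ (IsLIN ψ → IsLIN φ)) ∧
    (∀ F : AddSubgroup A, (F : Set A).Finite → (∀ a ∈ F, φ a ∈ F) →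
      ∀ ψ : (A ⧸ F) →+ (A ⧸ F),
        (∀ a : A, ψ (QuotientAddGroup.mk a) = QuotientAddGroup.mk (φ a)) →
        (IsInertial ψ → IsInertial φ) ∧ (IsLIN ψ → IsLIN φ)) := by
  refine ⟨fun A₀ hA₀ ψ hψ ↦ ?_, fun F hF _ ψ hψ ↦ ?_⟩
  · have hsemi : Function.Semiconj A₀.subtype ψ φ := hψ
    rw [← A₀.range_subtype] at hA₀
    exact ⟨.of_semiconj_of_index_range_ne_zero _ hA₀ hsemi,
      .of_semiconj_of_index_range_ne_zero _ hA₀ hsemi⟩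
  · have hsemi : Function.Semiconj (QuotientAddGroup.mk' F) φ ψ := fun a ↦ (hψ a).symm
    rw [← QuotientAddGroup.ker_mk' F] at hF
    exact ⟨.of_semiconj_of_finite_ker _ hF hsemi, .of_semiconj_of_finite_ker _ hF hsemi⟩
end

section
/- Let A be a torsion abelian group and φ an endomorphism of A; for each prime p let A_p denote the p-primary component of A (note φ(A_p) ⊆ A_p). Then: (R) φ is inertial (RIN) if and only if the restriction of φ to A_p is inertial for every prime p and for all but finitely many primes p one has φ(X) ⊆ X for every subgroup X of A_p. (L) φ is LIN if and only if the restriction of φ to A_p is LIN for every prime p and for all but finitely many primes p the restriction of φ to A_p is bijective and satisfies φ(X) ⊆ X for every subgroup X of A_p. -/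
/-- The `p`-primary component of an abelian group: the subgroup of elements annihilated
by some power of `p`. -/
def pPrimary (A : Type*) [AddCommGroup A] (p : ℕ) : AddSubgroup A where
  carrier := {a : A | ∃ k : ℕ, p ^ k • a = 0}
  zero_mem' := ⟨0, smul_zero _⟩
  add_mem' := by
    rintro a b ⟨k, hk⟩ ⟨l, hl⟩
    refine ⟨k + l, ?_⟩
    have ha : p ^ (k + l) • a = 0 := by rw [pow_add, mul_comm, mul_smul, hk, smul_zero]
    have hb : p ^ (k + l) • b = 0 := by rw [pow_add, mul_smul, hl, smul_zero]
    rw [smul_add, ha, hb, add_zero]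
  neg_mem' := by
    rintro a ⟨k, hk⟩
    exact ⟨k, by rw [smul_neg, hk, neg_zero]⟩

open AddSubgroup

def coprimeTorsion (A : Type*) [AddCommGroup A] (q : ℕ) : AddSubgroup A where
  carrier := {a | ∃ n : ℕ, n.Coprime q ∧ n • a = 0}
  zero_mem' := ⟨1, Nat.coprime_one_left q, smul_zero _⟩
  add_mem' := by
    rintro a b ⟨m, hm, hma⟩ ⟨n, hn, hnb⟩
    refine ⟨m * n, hm.mul_left hn, ?_⟩
    rw [smul_add, mul_smul, smul_comm m n a, hma, mul_smul, hnb, smul_zero, smul_zero, add_zero]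
  neg_mem' := by
    rintro a ⟨n, hn, hna⟩
    exact ⟨n, hn, by rw [smul_neg, hna, neg_zero]⟩

section

variable {A : Type*} [AddCommGroup A]

lemma map_le_pPrimary (φ : A →+ A) {p : ℕ} {X : AddSubgroup A} (hX : X ≤ pPrimary A p) :
    X.map φ ≤ pPrimary A p := by
  rintro _ ⟨a, ha, rfl⟩
  obtain ⟨k, hk⟩ := hX ha
  exact ⟨k, by rw [← map_nsmul, hk, map_zero]⟩

lemma mem_of_nsmul_mem_of_coprime {N : AddSubgroup A} {a : A} {m n : ℕ} (hmn : m.Coprime n)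
    (hn : n • a = 0) (hm : m • a ∈ N) : a ∈ N := by
  obtain ⟨u, v, huv⟩ := Nat.isCoprime_iff_coprime.mpr hmn
  have ha : a = u • (m • a) := by
    calc a = (u * m + v * n : ℤ) • a := by rw [huv, one_smul]
      _ = u • (m • a) := by
        rw [add_smul, mul_smul, mul_smul, natCast_zsmul, natCast_zsmul, hn, smul_zero, add_zero]
  rw [ha]
  exact N.zsmul_mem hm u

lemma pPrimary_le_coprimeTorsion {p q : ℕ} (hp : p.Prime) (hq : q.Prime) (hpq : p ≠ q) :
    pPrimary A p ≤ coprimeTorsion A q := by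
  rintro a ⟨k, hk⟩
  exact ⟨p ^ k, ((Nat.coprime_primes hp hq).mpr hpq).pow_left k, hk⟩

lemma eq_zero_of_mem_pPrimary_of_mem_coprimeTorsion {q : ℕ} {a : A} (ha : a ∈ pPrimary A q)
    (hc : a ∈ coprimeTorsion A q) : a = 0 := by
  obtain ⟨k, hk⟩ := ha
  obtain ⟨n, hn, hna⟩ := hc
  simpa using mem_of_nsmul_mem_of_coprime (N := ⊥) (hn.pow_right k) hk (by simpa using hna)

lemma iSup_inf_pPrimary_le {P : Set ℕ} (hP : ∀ p ∈ P, p.Prime) {W : ℕ → AddSubgroup A}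
    (hW : ∀ p ∈ P, W p ≤ pPrimary A p) {q : ℕ} (hq : q ∈ P) :
    (⨆ p ∈ P, W p) ⊓ pPrimary A q ≤ W q := by
  have hsup : (⨆ p ∈ P, W p) ≤ W q ⊔ coprimeTorsion A q := by
    refine iSup₂_le fun p hp => ?_
    rcases eq_or_ne p q with rfl | hpq
    · exact le_sup_left
    · exact (hW p hp).trans <|
        (pPrimary_le_coprimeTorsion (hP p hp) (hP q hq) hpq).trans le_sup_right
  rintro x ⟨hx, hxq⟩
  obtain ⟨w, hw, c, hc, rfl⟩ := mem_sup.mp (hsup hx)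
  have hcq : c ∈ pPrimary A q := by
    simpa using (pPrimary A q).sub_mem hxq (hW q hq hw)
  rwa [eq_zero_of_mem_pPrimary_of_mem_coprimeTorsion hcq hc, add_zero]

lemma relIndex_eq_zero_of_infinite_pPrimary {P : Set ℕ} (hP : P.Infinite)
    (hprime : ∀ p ∈ P, p.Prime) {N K : AddSubgroup A} {v : ℕ → A}
    (hv : ∀ p ∈ P, v p ∈ pPrimary A p) (hvK : ∀ p ∈ P, v p ∈ K) (hvN : ∀ p ∈ P, v p ∉ N) :
    N.relIndex K = 0 := by
  have : Infinite (K ⧸ N.addSubgroupOf K) := by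
    have := hP.to_subtype
    refine Infinite.of_injective (fun p : P => (⟨v p, hvK p p.2⟩ : K)) ?_
    -- distinct primes give distinct cosets: `q ^ l` kills `v q` and is invertible on `⟨v p⟩`
    rintro ⟨p, hp⟩ ⟨q, hq⟩ hpq
    by_contra hne
    have hpq' : p ≠ q := fun h => hne (Subtype.ext h)
    obtain ⟨k, hk⟩ := hv p hp
    obtain ⟨l, hl⟩ := hv q hq
    rw [QuotientAddGroup.eq] at hpq
    have hdiff : q ^ l • v p ∈ N := by
      have := N.nsmul_mem (mem_addSubgroupOf.mp hpq) (q ^ l)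
      rwa [AddSubgroup.coe_add, AddSubgroup.coe_neg, smul_add, smul_neg, hl, add_zero,
        neg_mem_iff] at this
    exact hvN p hp <| mem_of_nsmul_mem_of_coprime
      (((Nat.coprime_primes (hprime q hq) (hprime p hp)).mpr hpq'.symm).pow l k) hk hdiff
  exact Nat.card_eq_zero_of_infinite

lemma le_iSup_inf_pPrimary (htor : IsAddTorsion A) (X : AddSubgroup A) :
    X ≤ ⨆ (p : ℕ) (_ : p.Prime), X ⊓ pPrimary A p := by
  set S := ⨆ (p : ℕ) (_ : p.Prime), X ⊓ pPrimary A p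
  suffices h : ∀ n, 0 < n → ∀ x ∈ X, n • x = 0 → x ∈ S from fun x hx =>
    h _ (htor x).addOrderOf_pos x hx (addOrderOf_nsmul_eq_zero x)
  intro n
  induction n using Nat.recOnPosPrimePosCoprime with
  | prime_pow p k hp _ =>
    exact fun _ x hx hpx => mem_iSup_of_mem p (mem_iSup_of_mem hp ⟨hx, k, hpx⟩)
  | zero => exact fun h => absurd h (lt_irrefl 0)
  | one => exact fun _ x _ hx => by rw [one_smul] at hx; exact hx ▸ S.zero_mem
  | coprime a b ha hb hab iha ihb =>
    intro _ x hx habx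
    obtain ⟨u, v, huv⟩ := Nat.isCoprime_iff_coprime.mpr hab
    have hbx : b • x ∈ S := iha (by omega) _ (X.nsmul_mem hx b) (by rwa [smul_smul])
    have hax : a • x ∈ S := ihb (by omega) _ (X.nsmul_mem hx a) (by rwa [smul_smul, mul_comm])
    have hx' : x = v • (b • x) + u • (a • x) := by
      calc x = (u * a + v * b : ℤ) • x := by rw [huv, one_smul]
        _ = v • (b • x) + u • (a • x) := by
          rw [add_smul, mul_smul, mul_smul, natCast_zsmul, natCast_zsmul, add_comm]
    rw [hx']
    exact S.add_mem (S.zsmul_mem hbx v) (S.zsmul_mem hax u)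

lemma relIndex_ne_zero_of_le_left {H K L : AddSubgroup A} (hHK : H ≤ K)
    (h : H.relIndex L ≠ 0) : K.relIndex L ≠ 0 :=
  fun h0 => h (Nat.eq_zero_of_zero_dvd (h0 ▸ relIndex_dvd_of_le_left L hHK))

lemma relIndex_sup_ne_zero {H K L : AddSubgroup A} (hK : H.relIndex K ≠ 0)
    (hL : H.relIndex L ≠ 0) : H.relIndex (K ⊔ L) ≠ 0 := by
  have hHK : H.relIndex (H ⊔ K) ≠ 0 := by rwa [relIndex_sup_left]
  have hHKL : (H ⊔ K).relIndex (H ⊔ K ⊔ L) ≠ 0 := by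
    rw [relIndex_sup_left]
    exact relIndex_ne_zero_of_le_left le_sup_left hL
  have h : H.relIndex (H ⊔ K ⊔ L) ≠ 0 := by
    rw [← relIndex_mul_relIndex H (H ⊔ K) _ le_sup_left le_sup_left]
    exact mul_ne_zero hHK hHKL
  exact fun h0 => h (relIndex_eq_zero_of_le_right (sup_le_sup_right le_sup_right L) h0)

lemma relIndex_biSup_ne_zero {ι : Type*} (H : AddSubgroup A) (Y : ι → AddSubgroup A)
    (s : Finset ι) (hY : ∀ i ∈ s, H.relIndex (Y i) ≠ 0) : H.relIndex (⨆ i ∈ s, Y i) ≠ 0 := by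
  classical
  induction s using Finset.induction_on with
  | empty => simp [relIndex_bot_right]
  | insert i s _ ih =>
    rw [Finset.iSup_insert]
    exact relIndex_sup_ne_zero (hY i (s.mem_insert_self i))
      (ih fun j hj => hY j (Finset.mem_insert_of_mem hj))

section

variable (α β : A →+ A)

lemma finite_setOf_not_map_le_map (h : ∀ X : AddSubgroup A, (X.map α).relIndex (X.map β) ≠ 0) :
    {p : ℕ | p.Prime ∧ ¬ ∀ X : AddSubgroup A, X ≤ pPrimary A p → X.map β ≤ X.map α}.Finite := by
  set P := {p : ℕ | p.Prime ∧ ¬ ∀ X : AddSubgroup A, X ≤ pPrimary A p → X.map β ≤ X.map α}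
  by_contra hP
  have hwit : ∀ p, ∃ (W : AddSubgroup A) (v : A), p ∈ P →
      W ≤ pPrimary A p ∧ v ∈ W.map β ∧ v ∉ W.map α := by
    intro p
    by_cases hp : p ∈ P
    · obtain ⟨W, hW, hβα⟩ := not_forall₂.mp hp.2
      obtain ⟨v, hvβ, hvα⟩ := SetLike.not_le_iff_exists.mp hβα
      exact ⟨W, v, fun _ => ⟨hW, hvβ, hvα⟩⟩
    · exact ⟨⊥, 0, fun h => absurd h hp⟩
  choose W v hWv using hwit
  refine h (⨆ p ∈ P, W p) (relIndex_eq_zero_of_infinite_pPrimary hP (fun p hp => hp.1)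
    (v := v) (fun p hp => map_le_pPrimary β (hWv p hp).1 (hWv p hp).2.1)
    (fun p hp => map_mono (le_biSup W hp) (hWv p hp).2.1) fun p hp hvα => ?_)
  simp only [AddSubgroup.map_iSup] at hvα
  exact (hWv p hp).2.2 <| iSup_inf_pPrimary_le (fun q hq => hq.1)
    (fun q hq => map_le_pPrimary α (hWv q hq).1) hp
    ⟨hvα, map_le_pPrimary β (hWv p hp).1 (hWv p hp).2.1⟩

lemma relIndex_map_ne_zero_of_pPrimary (htor : IsAddTorsion A)
    (hloc : ∀ p : ℕ, p.Prime → ∀ X : AddSubgroup A, X ≤ pPrimary A p →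
      (X.map α).relIndex (X.map β) ≠ 0)
    (hfin : {p : ℕ | p.Prime ∧
      ¬ ∀ X : AddSubgroup A, X ≤ pPrimary A p → X.map β ≤ X.map α}.Finite)
    (X : AddSubgroup A) : (X.map α).relIndex (X.map β) ≠ 0 := by
  set S := hfin.toFinset
  have hβ : X.map β ≤ X.map α ⊔ ⨆ p ∈ S, (X ⊓ pPrimary A p).map β := by
    refine (map_mono (le_iSup_inf_pPrimary htor X)).trans ?_
    simp only [AddSubgroup.map_iSup]
    refine iSup₂_le fun p hp => ?_
    by_cases hpS : p ∈ S
    · exact le_sup_of_le_right (le_biSup (fun p => (X ⊓ pPrimary A p).map β) hpS)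
    · have hgood : ∀ Y : AddSubgroup A, Y ≤ pPrimary A p → Y.map β ≤ Y.map α := by
        by_contra hbad
        exact hpS (hfin.mem_toFinset.mpr ⟨hp, hbad⟩)
      exact le_sup_of_le_left ((hgood _ inf_le_right).trans (map_mono inf_le_left))
  have hS : ∀ p ∈ S, (X.map α).relIndex ((X ⊓ pPrimary A p).map β) ≠ 0 := fun p hp =>
    relIndex_ne_zero_of_le_left (map_mono inf_le_left)
      (hloc p (hfin.mem_toFinset.mp hp).1 _ inf_le_right)
  have hself : (X.map α).relIndex (X.map α) ≠ 0 := by rw [relIndex_self]; exact one_ne_zero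
  exact fun h0 => relIndex_sup_ne_zero hself (relIndex_biSup_ne_zero _ _ S hS)
    (relIndex_eq_zero_of_le_right hβ h0)

theorem forall_relIndex_map_ne_zero_iff (htor : IsAddTorsion A) :
    (∀ X : AddSubgroup A, (X.map α).relIndex (X.map β) ≠ 0) ↔
      (∀ p : ℕ, p.Prime → ∀ X : AddSubgroup A, X ≤ pPrimary A p →
          (X.map α).relIndex (X.map β) ≠ 0) ∧
        {p : ℕ | p.Prime ∧
          ¬ ∀ X : AddSubgroup A, X ≤ pPrimary A p → X.map β ≤ X.map α}.Finite :=
  ⟨fun h => ⟨fun _ _ X _ => h X, finite_setOf_not_map_le_map α β h⟩,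
    fun ⟨hloc, hfin⟩ => relIndex_map_ne_zero_of_pPrimary α β htor hloc hfin⟩

end

lemma zmultiples_eq_of_le_of_addOrderOf_le {y z : A} (hz : IsOfFinAddOrder z)
    (hle : zmultiples y ≤ zmultiples z) (h : addOrderOf z ≤ addOrderOf y) :
    zmultiples y = zmultiples z := by
  have : Finite (zmultiples z) := (finite_zmultiples.mpr hz).to_subtype
  exact eq_of_le_of_card_ge hle (by rwa [Nat.card_zmultiples, Nat.card_zmultiples])

lemma forall_le_map_iff_bijOn_and_map_le (htor : IsAddTorsion A) (φ : A →+ A)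
    (H : AddSubgroup A) :
    (∀ X : AddSubgroup A, X ≤ H → X ≤ X.map φ) ↔
      Set.BijOn φ H H ∧ ∀ X : AddSubgroup A, X ≤ H → X.map φ ≤ X := by
  constructor
  · intro h
    have hinv : ∀ X : AddSubgroup A, X ≤ H → X.map φ ≤ X := by
      rintro X hX _ ⟨x, hx, rfl⟩
      have hle : zmultiples x ≤ zmultiples (φ x) := by
        simpa only [AddMonoidHom.map_zmultiples] using h _ (zmultiples_le.mpr (hX hx))
      have hord : addOrderOf (φ x) ≤ addOrderOf x :=
        Nat.le_of_dvd (htor x).addOrderOf_pos (addOrderOf_map_dvd φ x)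
      rw [← zmultiples_le, ← zmultiples_eq_of_le_of_addOrderOf_le (htor _) hle hord, zmultiples_le]
      exact hx
    refine ⟨⟨fun x hx => hinv H le_rfl ⟨x, hx, rfl⟩, fun a ha b hb hab => ?_,
      fun x hx => h H le_rfl hx⟩, hinv⟩
    have hab' := h _ (zmultiples_le.mpr (H.sub_mem ha hb)) (mem_zmultiples (a - b))
    rw [AddMonoidHom.map_zmultiples, map_sub, hab, sub_self, zmultiples_zero_eq_bot, mem_bot,
      sub_eq_zero] at hab'
    exact hab'
  · rintro ⟨hbij, hinv⟩ X hX x hx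
    have hord : addOrderOf x ≤ addOrderOf (φ x) :=
      Nat.le_of_dvd (htor _).addOrderOf_pos <| addOrderOf_dvd_of_nsmul_eq_zero <|
        hbij.injOn (H.nsmul_mem (hX hx) _) H.zero_mem
          (by rw [map_nsmul, addOrderOf_nsmul_eq_zero, map_zero])
    have hle : zmultiples (φ x) ≤ zmultiples x := by
      simpa only [AddMonoidHom.map_zmultiples] using hinv _ (zmultiples_le.mpr (hX hx))
    have hx' : x ∈ (zmultiples x).map φ := by
      rw [AddMonoidHom.map_zmultiples, zmultiples_eq_of_le_of_addOrderOf_le (htor x) hle hord]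
      exact mem_zmultiples x
    exact map_mono (zmultiples_le.mpr hx) hx'

end

/-- An endomorphism of a torsion abelian group is inertial (resp. LIN) iff it is inertial
(resp. LIN and bijective) on every `p`-primary component and a power endomorphism
(resp. a bijective power endomorphism) on all but finitely many of them. Note that each
primary component is invariant under `φ`. -/
theorem stmt_15 {A : Type*} [AddCommGroup A] (htor : AddMonoid.IsTorsion A)
    (φ : A →+ A) :
    (∀ p : ℕ, (pPrimary A p).map φ ≤ pPrimary A p) ∧
    (IsInertial φ ↔
      ((∀ p : ℕ, p.Prime → ∀ X : AddSubgroup A, X ≤ pPrimary A p →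
          X.relIndex (X ⊔ X.map φ) ≠ 0) ∧
        {p : ℕ | p.Prime ∧
          ¬ ∀ X : AddSubgroup A, X ≤ pPrimary A p → X.map φ ≤ X}.Finite)) ∧
    (IsLIN φ ↔
      ((∀ p : ℕ, p.Prime → ∀ X : AddSubgroup A, X ≤ pPrimary A p →
          (X.map φ).relIndex X ≠ 0) ∧
        {p : ℕ | p.Prime ∧
          ¬ (Set.BijOn φ (pPrimary A p) (pPrimary A p) ∧
             ∀ X : AddSubgroup A, X ≤ pPrimary A p → X.map φ ≤ X)}.Finite)) := by
  refine ⟨fun p => map_le_pPrimary φ le_rfl, ?_, ?_⟩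
  · simpa only [IsInertial, relIndex_sup_left, map_id] using
      forall_relIndex_map_ne_zero_iff (AddMonoidHom.id A) φ htor
  · simpa only [IsLIN, map_id, ← forall_le_map_iff_bijOn_and_map_le htor] using
      forall_relIndex_map_ne_zero_iff φ (AddMonoidHom.id A) htor
end

section
/- Let A be an abelian group, let D be a divisible torsion subgroup of A, and let φ be an endomorphism of A which is either inertial (RIN) or LIN. Then φ(X) ⊆ X for every subgroup X of A contained in D; in particular φ(D) ⊆ D and φ acts as a multiplication on D. -/
open AddSubgroup

section

variable {A : Type*} [AddCommGroup A]

theorem mem_zmultiples_of_addOrderOf_dvd {g a b : A} (hg : IsOfFinAddOrder g)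
    (ha : a ∈ zmultiples g) (hb : b ∈ zmultiples g) (hab : addOrderOf b ∣ addOrderOf a) :
    b ∈ zmultiples a := by
  -- With `a = i • g`, `b = j • g`, `N = addOrderOf g` and `d = gcd i N`: the order of `a`
  -- divides `N / d`, so that of `b` does too, which forces `d ∣ j`; and `d • g ∈ zmultiples a`.
  obtain ⟨i, rfl⟩ := ha
  obtain ⟨j, rfl⟩ := hb
  set N := addOrderOf g
  set d := Int.gcd i N
  obtain ⟨e, hNe⟩ : (d : ℤ) ∣ N := Int.gcd_dvd_right i N
  obtain ⟨i', hi'⟩ : (d : ℤ) ∣ i := Int.gcd_dvd_left i N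
  have he : e ≠ 0 := by
    rintro rfl
    simp [N, hg.addOrderOf_pos.ne'] at hNe
  have hei : e • (i • g) = 0 := by
    rw [← mul_zsmul, ← addOrderOf_dvd_iff_zsmul_eq_zero]
    exact ⟨i', by rw [hNe, hi']; ring⟩
  have hej : e • (j • g) = 0 := by
    rw [← addOrderOf_dvd_iff_zsmul_eq_zero] at hei ⊢
    exact (Int.natCast_dvd_natCast.mpr hab).trans hei
  obtain ⟨j', rfl⟩ : (d : ℤ) ∣ j := by
    rw [← mul_zsmul, ← addOrderOf_dvd_iff_zsmul_eq_zero, hNe, mul_comm e] at hej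
    exact (mul_dvd_mul_iff_right he).mp hej
  have hNg : (N : ℤ) • g = 0 := by simp [N, addOrderOf_nsmul_eq_zero]
  have hdg : (d : ℤ) • g = Int.gcdA i N • (i • g) := by
    rw [Int.gcd_eq_gcd_ab i N, add_zsmul, mul_comm (N : ℤ), mul_zsmul _ _ (N : ℤ), hNg,
      smul_zero, add_zero, mul_comm, mul_zsmul]
  exact ⟨j' * Int.gcdA i N, by
    change (j' * Int.gcdA i N) • (i • g) = ((d : ℤ) * j') • g
    rw [mul_zsmul, ← hdg, ← mul_zsmul, mul_comm]⟩

def AddSubgroup.IsLocallyFiniteCyclic (W : AddSubgroup A) : Prop :=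
  ∀ a ∈ W, ∀ b ∈ W, ∃ g : A, IsOfFinAddOrder g ∧ a ∈ zmultiples g ∧ b ∈ zmultiples g

theorem AddSubgroup.IsLocallyFiniteCyclic.mem_zmultiples_of_addOrderOf_dvd
    {W : AddSubgroup A} (hW : W.IsLocallyFiniteCyclic) {a b : A} (ha : a ∈ W) (hb : b ∈ W)
    (hab : addOrderOf b ∣ addOrderOf a) : b ∈ zmultiples a :=
  let ⟨_, hg, hag, hbg⟩ := hW a ha b hb
  _root_.mem_zmultiples_of_addOrderOf_dvd hg hag hbg hab

theorem AddSubgroup.exists_factorial_root_chain {D : AddSubgroup A}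
    (hdiv : ∀ n : ℕ, 0 < n → ∀ d ∈ D, ∃ d' ∈ D, n • d' = d) {x : A} (hx : x ∈ D) :
    ∃ Y : ℕ → A, (∀ k, Y k ∈ D) ∧ (∀ k, Y k ∈ zmultiples (Y (k + 1))) ∧
      ∀ k, k.factorial • Y k = x := by
  choose root hroot_mem hroot using fun (k : ℕ) (d : D) => hdiv (k + 1) k.succ_pos d d.2
  let Z : ℕ → D := fun k => Nat.rec ⟨x, hx⟩ (fun k d => ⟨root k d, hroot_mem k d⟩) k
  have hZ (k : ℕ) : (k + 1) • (Z (k + 1)).1 = (Z k).1 := hroot k (Z k)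
  refine ⟨fun k => (Z k).1, fun k => (Z k).2, fun k => ?_, fun k => ?_⟩ <;> beta_reduce
  · rw [← hZ k]
    exact nsmul_mem (mem_zmultiples _) _
  · induction k with
    | zero => simp [Z]
    | succ k ih => rw [Nat.factorial_succ, mul_nsmul, hZ, ih]

theorem AddSubgroup.exists_isLocallyFiniteCyclic_roots {D : AddSubgroup A}
    (hdiv : ∀ n : ℕ, 0 < n → ∀ d ∈ D, ∃ d' ∈ D, n • d' = d)
    (htor : ∀ d ∈ D, ∃ n : ℕ, 0 < n ∧ n • d = 0) {x : A} (hx : x ∈ D) :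
    ∃ W : AddSubgroup A, W.IsLocallyFiniteCyclic ∧ ∀ n : ℕ, 0 < n → ∃ y ∈ W, n • y = x := by
  obtain ⟨Y, hYD, hY, hYx⟩ := D.exists_factorial_root_chain hdiv hx
  have hmono : Monotone fun k => zmultiples (Y k) :=
    monotone_nat_of_le_succ fun k => zmultiples_le.mpr (hY k)
  have hmem : ∀ a, a ∈ ⨆ k, zmultiples (Y k) ↔ ∃ k, a ∈ zmultiples (Y k) := fun a =>
    mem_iSup_of_directed hmono.directed_le
  refine ⟨⨆ k, zmultiples (Y k), fun a ha b hb => ?_, fun n hn => ?_⟩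
  · obtain ⟨i, hi⟩ := (hmem a).mp ha
    obtain ⟨j, hj⟩ := (hmem b).mp hb
    obtain ⟨m, hm, hmY⟩ := htor _ (hYD (max i j))
    exact ⟨Y (max i j), isOfFinAddOrder_iff_nsmul_eq_zero.mpr ⟨m, hm, hmY⟩,
      hmono (le_max_left i j) hi, hmono (le_max_right i j) hj⟩
  · refine ⟨(n.factorial / n) • Y n, nsmul_mem ((hmem _).mpr ⟨n, mem_zmultiples _⟩) _, ?_⟩
    rw [← mul_nsmul', Nat.mul_div_cancel' (Nat.dvd_factorial hn le_rfl), hYx]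

theorem IsInertial.map_mem_zmultiples {φ : A →+ A} (hφ : IsInertial φ) {W : AddSubgroup A}
    (hW : W.IsLocallyFiniteCyclic) {x : A} (hroot : ∀ n : ℕ, 0 < n → ∃ y ∈ W, n • y = x) :
    φ x ∈ zmultiples x := by
  obtain ⟨y, hyW, rfl⟩ := hroot _ (Nat.pos_of_ne_zero (hφ W))
  have hφy : W.relIndex (W ⊔ W.map φ) • φ y ∈ W :=
    nsmul_relIndex_mem W (mem_sup_right (mem_map_of_mem φ hyW))
  rw [← map_nsmul] at hφy
  exact hW.mem_zmultiples_of_addOrderOf_dvd (nsmul_mem hyW _) hφy (addOrderOf_map_dvd φ _)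

theorem IsLIN.map_mem_zmultiples {φ : A →+ A} (hφ : IsLIN φ) {W : AddSubgroup A}
    (hW : W.IsLocallyFiniteCyclic) {x : A} (hroot : ∀ n : ℕ, 0 < n → ∃ y ∈ W, n • y = x) :
    φ x ∈ zmultiples x := by
  obtain ⟨y, hyW, rfl⟩ := hroot _ (Nat.pos_of_ne_zero (hφ W))
  obtain ⟨s, hsW, hs⟩ := mem_map.mp (nsmul_relIndex_mem (W.map φ) hyW)
  have hφsW : φ s ∈ W := hs ▸ nsmul_mem hyW _
  rw [← hs]
  have hφs : φ s ∈ zmultiples s :=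
    hW.mem_zmultiples_of_addOrderOf_dvd hsW hφsW (addOrderOf_map_dvd φ s)
  simpa only [AddMonoidHom.map_zmultiples] using mem_map_of_mem φ hφs

end

/-- If `D` is a divisible torsion subgroup of an abelian group `A` and `φ` is an inertial
or LIN endomorphism of `A`, then `φ` maps every subgroup of `D` into itself; in
particular `φ(D) ⊆ D` and `φ` acts as a multiplication on `D`. -/
theorem stmt_17 {A : Type*} [AddCommGroup A] (D : AddSubgroup A)
    (hdiv : ∀ n : ℕ, 0 < n → ∀ d ∈ D, ∃ d' ∈ D, n • d' = d)
    (htor : ∀ d ∈ D, ∃ n : ℕ, 0 < n ∧ n • d = 0)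
    (φ : A →+ A) (hφ : IsInertial φ ∨ IsLIN φ) :
    ∀ X : AddSubgroup A, X ≤ D → X.map φ ≤ X := by
  rintro X hXD _ ⟨x, hxX, rfl⟩
  obtain ⟨W, hW, hroot⟩ := D.exists_isLocallyFiniteCyclic_roots hdiv htor (hXD hxX)
  have hφx : φ x ∈ zmultiples x :=
    hφ.elim (·.map_mem_zmultiples hW hroot) (·.map_mem_zmultiples hW hroot)
  exact zmultiples_le.mpr hxX hφx
end

section
/- Let A be an abelian group, let φ be an endomorphism of A which is either inertial (RIN) or LIN, and let a ∈ A. Then the torsion subgroup of the smallest φ-invariant subgroup of A containing a (the additive subgroup generated by {φ^k(a) : k ≥ 0}) is finite. -/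
open Polynomial

section FiniteSubgroup

variable {G : Type*} [AddCommGroup G]

theorem AddSubgroup.relIndex_eq_zero_of_forall_sub_notMem {H K : AddSubgroup G} (f : ℕ → G)
    (hfK : ∀ k, f k ∈ K) (hf : ∀ k l, k ≠ l → f k - f l ∉ H) : H.relIndex K = 0 := by
  rw [AddSubgroup.relIndex, AddSubgroup.index_eq_zero_iff_infinite]
  refine Infinite.of_injective (fun k => ((⟨f k, hfK k⟩ : K) : K ⧸ H.addSubgroupOf K))
    fun k l hkl => ?_
  by_contra hne
  exact hf k l hne (AddSubgroup.mem_addSubgroupOf.1 (QuotientAddGroup.eq_iff_sub_mem.1 hkl))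

theorem AddSubgroup.finite_of_finite_nsmul_image (B : AddSubgroup G) (n : ℕ)
    (hker : {x | x ∈ B ∧ n • x = 0}.Finite) (him : ((n • ·) '' (B : Set G)).Finite) :
    (B : Set G).Finite := by
  refine Set.Finite.of_finite_fibers _ him ?_
  rintro _ ⟨x₀, hx₀, rfl⟩
  refine (hker.image (x₀ + ·)).subset ?_
  rintro x ⟨hx, hxx₀⟩
  refine ⟨x - x₀, ⟨B.sub_mem hx hx₀, ?_⟩, add_sub_cancel x₀ x⟩
  simpa [smul_sub, sub_eq_zero] using hxx₀

theorem AddSubgroup.finite_of_nsmul_eq_zero_of_finite_prime_torsion {B : AddSubgroup G} {N : ℕ}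
    (hN : 0 < N) (hB : ∀ x ∈ B, N • x = 0)
    (hp : ∀ p : ℕ, p.Prime → {x | x ∈ B ∧ p • x = 0}.Finite) :
    (B : Set G).Finite := by
  induction N using induction_on_primes generalizing B with
  | zero => omega
  | one => exact (Set.finite_singleton 0).subset fun x hx => by simpa using hB x hx
  | prime_mul p n hp' ih =>
    refine B.finite_of_finite_nsmul_image p (hp p hp') ?_
    have h := ih (B := B.map (nsmulAddMonoidHom p)) (Nat.pos_of_mul_pos_left hN) ?_ ?_
    · simpa using h
    · rintro _ ⟨x, hx, rfl⟩
      simpa [smul_smul, mul_comm] using hB x hx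
    · intro q hq
      refine (hp q hq).subset ?_
      rintro _ ⟨⟨x, hx, rfl⟩, hqx⟩
      exact ⟨B.nsmul_mem hx p, hqx⟩

end FiniteSubgroup

section TorsionSubmodule

variable (R M : Type*) [Semiring R] [AddCommMonoid M] [Module R M]

def addTorsionSubmodule : Submodule R M where
  toAddSubmonoid := AddCommMonoid.addTorsion M
  smul_mem' c _ hx := (DistribSMul.toAddMonoidHom M c).isOfFinAddOrder hx

variable {R M}

theorem mem_addTorsionSubmodule {x : M} : x ∈ addTorsionSubmodule R M ↔ IsOfFinAddOrder x :=
  Iff.rfl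

end TorsionSubmodule

theorem Submodule.FG.exists_le_torsionBy {R M : Type*} [CommSemiring R] [AddCommMonoid M]
    [Module R M] {W : Submodule R M} (hW : W.FG) (hWt : W ≤ addTorsionSubmodule R M) :
    ∃ N : ℕ, 0 < N ∧ W ≤ Submodule.torsionBy R M N := by
  obtain ⟨s, rfl⟩ := hW
  have hs : ∀ x ∈ s, IsOfFinAddOrder x := fun x hx =>
    mem_addTorsionSubmodule.1 (hWt (Submodule.subset_span hx))
  refine ⟨∏ x ∈ s, addOrderOf x, Finset.prod_pos fun x hx => (hs x hx).addOrderOf_pos, ?_⟩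
  rw [Submodule.span_le]
  intro x hx
  rw [SetLike.mem_coe, Submodule.mem_torsionBy_iff, Nat.cast_smul_eq_nsmul,
    ← addOrderOf_dvd_iff_nsmul_eq_zero]
  exact Finset.dvd_prod_of_mem _ hx

section PolynomialModule

variable {M : Type*} [AddCommGroup M] [Module ℤ[X] M]

theorem finite_span_singleton_of_torsionOf_not_le {p : ℕ} [Fact p.Prime] {b : M}
    (hpb : (p : ℤ[X]) • b = 0)
    (hb : ¬ Ideal.torsionOf ℤ[X] M b ≤ RingHom.ker (mapRingHom (Int.castRingHom (ZMod p)))) :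
    ((ℤ[X] ∙ b : Submodule ℤ[X] M) : Set M).Finite := by
  obtain ⟨f, hfb, hf⟩ := SetLike.not_le_iff_exists.1 hb
  rw [Ideal.mem_torsionOf_iff] at hfb
  rw [RingHom.mem_ker, coe_mapRingHom] at hf
  -- `ℤ[X] ⧸ ann b` is a quotient of `𝔽_p[X] ⧸ (f mod p)`, which is finite as `f mod p ≠ 0`.
  set g := f.map (Int.castRingHom (ZMod p))
  let π : ℤ[X] →+* AdjoinRoot g := (AdjoinRoot.mk g).comp (mapRingHom (Int.castRingHom (ZMod p)))
  have hπ : Function.Surjective π :=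
    AdjoinRoot.mk_surjective.comp (map_surjective _ (ZMod.ringHom_surjective _))
  have hker : RingHom.ker π ≤ Ideal.torsionOf ℤ[X] M b := by
    intro h hh
    obtain ⟨q', hq'⟩ := AdjoinRoot.mk_eq_zero.1 hh
    rw [coe_mapRingHom] at hq'
    obtain ⟨q, rfl⟩ := map_surjective _ (ZMod.ringHom_surjective (Int.castRingHom (ZMod p))) q'
    obtain ⟨r, hr⟩ : C (p : ℤ) ∣ h - f * q := by
      rw [C_dvd_iff_dvd_coeff]
      intro i
      rw [← ZMod.intCast_zmod_eq_zero_iff_dvd, ← eq_intCast (Int.castRingHom (ZMod p)),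
        ← coeff_map, Polynomial.map_sub, Polynomial.map_mul, ← hq', sub_self, coeff_zero]
    rw [Ideal.mem_torsionOf_iff, sub_eq_iff_eq_add.1 hr, add_smul, mul_comm (C _) r, mul_comm f q,
      mul_smul, mul_smul, hfb, C_eq_natCast, hpb, smul_zero, smul_zero, add_zero]
  have : Finite (AdjoinRoot g) := by
    have := (AdjoinRoot.powerBasis hf).finite
    exact Module.finite_of_finite (ZMod p)
  have : Finite (ℤ[X] ⧸ Ideal.torsionOf ℤ[X] M b) := Finite.of_surjective _
    ((Ideal.Quotient.factor_surjective hker).comp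
      (RingHom.quotientKerEquivOfSurjective hπ).symm.surjective)
  exact Set.finite_coe_iff.1 ((Ideal.quotTorsionOfEquivSpanSingleton ℤ[X] M b).finite_iff.1 this)

theorem Submodule.FG.finite_of_forall_torsionOf_not_le {W : Submodule ℤ[X] M} (hW : W.FG)
    {p : ℕ} [Fact p.Prime] (hWp : W ≤ Submodule.torsionBy ℤ[X] M p)
    (hann : ∀ b ∈ W,
      ¬ Ideal.torsionOf ℤ[X] M b ≤ RingHom.ker (mapRingHom (Int.castRingHom (ZMod p)))) :
    (W : Set M).Finite := by
  classical
  obtain ⟨s, rfl⟩ := hW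
  induction s using Finset.induction_on with
  | empty => simp
  | insert x s _ ih =>
    have hx : x ∈ Submodule.span ℤ[X] (insert x s : Finset M) := Submodule.subset_span (by simp)
    have hs : Submodule.span ℤ[X] (s : Set M) ≤ Submodule.span ℤ[X] (insert x s : Finset M) :=
      Submodule.span_mono (by simp)
    rw [Finset.coe_insert, Submodule.span_insert, Submodule.coe_sup]
    exact (finite_span_singleton_of_torsionOf_not_le (hWp hx) (hann x hx)).add
      (ih (hs.trans hWp) fun b hb => hann b (hs hb))

theorem exists_prime_torsionOf_le_ker_of_infinite {V : Submodule ℤ[X] M} (hV : V.FG)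
    (hinf : ((V ⊓ addTorsionSubmodule ℤ[X] M : Submodule ℤ[X] M) : Set M).Infinite) :
    ∃ p : ℕ, p.Prime ∧ ∃ b : M,
      Ideal.torsionOf ℤ[X] M b ≤ RingHom.ker (mapRingHom (Int.castRingHom (ZMod p))) := by
  by_contra! hfree
  set T := V ⊓ addTorsionSubmodule ℤ[X] M
  have hT : T.FG := hV.of_le inf_le_left
  obtain ⟨N, hN, hTN⟩ := hT.exists_le_torsionBy inf_le_right
  refine hinf (AddSubgroup.finite_of_nsmul_eq_zero_of_finite_prime_torsion
    (B := T.toAddSubgroup) hN (fun x hx => by simpa [Nat.cast_smul_eq_nsmul] using hTN hx)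
    fun p hp => ?_)
  have := Fact.mk hp
  refine ((hT.of_le inf_le_left).finite_of_forall_torsionOf_not_le
    (inf_le_right : T ⊓ Submodule.torsionBy ℤ[X] M p ≤ _) fun b _ => hfree p hp b).subset ?_
  rintro x ⟨hxT, hpx⟩
  exact ⟨hxT, by simpa [Nat.cast_smul_eq_nsmul] using hpx⟩

end PolynomialModule

section Endomorphism

variable {M : Type*} [AddCommGroup M]

theorem AddSubgroup.map_closure_iterate_image (φ : M →+ M) (b : M) (S : Set ℕ) :
    (AddSubgroup.closure ((φ^[·] b) '' S)).map φ =
      AddSubgroup.closure ((φ^[·] b) '' ((· + 1) '' S)) := by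
  rw [AddMonoidHom.map_closure, Set.image_image, Set.image_image]
  simp only [Function.iterate_succ_apply']

variable [Module ℤ[X] M] {φ : M →+ M}

theorem X_pow_smul_eq_iterate (hX : ∀ x, (X : ℤ[X]) • x = φ x) (k : ℕ) (x : M) :
    (X ^ k : ℤ[X]) • x = φ^[k] x := by
  induction k with
  | zero => simp
  | succ k ih => rw [pow_succ', mul_smul, ih, hX, Function.iterate_succ_apply']

theorem closure_range_iterate_le_span (hX : ∀ x, (X : ℤ[X]) • x = φ x) (a : M) :
    AddSubgroup.closure (Set.range fun k => φ^[k] a) ≤ (ℤ[X] ∙ a).toAddSubgroup := by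
  rw [AddSubgroup.closure_le, Set.range_subset_iff]
  intro k
  rw [SetLike.mem_coe, Submodule.mem_toAddSubgroup, ← X_pow_smul_eq_iterate hX]
  exact Submodule.smul_mem _ _ (Submodule.mem_span_singleton_self a)

theorem exists_smul_eq_of_mem_closure_iterate_image (hX : ∀ x, (X : ℤ[X]) • x = φ x)
    {b x : M} {S : Set ℕ} (hx : x ∈ AddSubgroup.closure ((φ^[·] b) '' S)) :
    ∃ f : ℤ[X], (∀ i ∉ S, f.coeff i = 0) ∧ f • b = x := by
  induction hx using AddSubgroup.closure_induction with
  | mem _ hy =>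
    obtain ⟨j, hj, rfl⟩ := hy
    refine ⟨X ^ j, fun i hi => ?_, X_pow_smul_eq_iterate hX j b⟩
    rw [coeff_X_pow, if_neg (by rintro rfl; exact hi hj)]
  | zero => exact ⟨0, by simp, zero_smul _ _⟩
  | add _ _ _ _ hu hv =>
    obtain ⟨f, hf, rfl⟩ := hu
    obtain ⟨g, hg, rfl⟩ := hv
    exact ⟨f + g, fun i hi => by simp [hf i hi, hg i hi], add_smul f g b⟩
  | neg _ _ hu =>
    obtain ⟨f, hf, rfl⟩ := hu
    exact ⟨-f, fun i hi => by simp [hf i hi], neg_smul f b⟩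

variable {p : ℕ} [Fact (1 < p)] {b : M}

theorem iterate_sub_iterate_notMem_closure (hX : ∀ x, (X : ℤ[X]) • x = φ x)
    (hb : Ideal.torsionOf ℤ[X] M b ≤ RingHom.ker (mapRingHom (Int.castRingHom (ZMod p))))
    {S : Set ℕ} {k l : ℕ} (hk : k ∉ S) (hkl : k ≠ l) :
    φ^[k] b - φ^[l] b ∉ AddSubgroup.closure ((φ^[·] b) '' S) := by
  intro hmem
  obtain ⟨f, hfS, hfb⟩ := exists_smul_eq_of_mem_closure_iterate_image hX hmem
  have hrel : X ^ k - X ^ l - f ∈ Ideal.torsionOf ℤ[X] M b := by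
    rw [Ideal.mem_torsionOf_iff, sub_smul, sub_smul, X_pow_smul_eq_iterate hX,
      X_pow_smul_eq_iterate hX, hfb, sub_self]
  have := congrArg (coeff · k) (RingHom.mem_ker.1 (hb hrel))
  simp [coeff_X_pow, hkl, hfS k hk] at this

theorem not_isInertial_of_torsionOf_le_ker (hX : ∀ x, (X : ℤ[X]) • x = φ x)
    (hb : Ideal.torsionOf ℤ[X] M b ≤ RingHom.ker (mapRingHom (Int.castRingHom (ZMod p)))) :
    ¬ IsInertial φ := by
  intro h
  refine h (AddSubgroup.closure ((φ^[·] b) '' {j | Even j}))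
    (AddSubgroup.relIndex_eq_zero_of_forall_sub_notMem (fun k => φ^[2 * k + 1] b)
      (fun k => ?_) fun k l hkl => iterate_sub_iterate_notMem_closure hX hb (by simp) (by omega))
  refine AddSubgroup.mem_sup_right ?_
  rw [Function.iterate_succ_apply']
  exact AddSubgroup.mem_map_of_mem φ (AddSubgroup.subset_closure ⟨2 * k, even_two_mul k, rfl⟩)

theorem not_isLIN_of_torsionOf_le_ker (hX : ∀ x, (X : ℤ[X]) • x = φ x)
    (hb : Ideal.torsionOf ℤ[X] M b ≤ RingHom.ker (mapRingHom (Int.castRingHom (ZMod p)))) :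
    ¬ IsLIN φ := by
  intro h
  refine h (AddSubgroup.closure ((φ^[·] b) '' {j | Even j}))
    (AddSubgroup.relIndex_eq_zero_of_forall_sub_notMem (fun k => φ^[2 * k] b)
      (fun k => AddSubgroup.subset_closure ⟨2 * k, even_two_mul k, rfl⟩) fun k l hkl => ?_)
  rw [AddSubgroup.map_closure_iterate_image]
  refine iterate_sub_iterate_notMem_closure hX hb ?_ (by omega)
  rintro ⟨j, ⟨r, rfl⟩, hj⟩
  dsimp only at hj
  omega

end Endomorphism

/-- If `φ` is an inertial or LIN endomorphism of an abelian group `A` and `a ∈ A`, then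
the torsion subgroup of the smallest `φ`-invariant subgroup containing `a` (generated by
the iterates `φ^k(a)`) is finite. -/
theorem stmt_19 {A : Type*} [AddCommGroup A]
    (φ : A →+ A) (hφ : IsInertial φ ∨ IsLIN φ) (a : A) :
    {x : A | x ∈ AddSubgroup.closure (Set.range fun k : ℕ => (⇑φ)^[k] a) ∧
      ∃ n : ℕ, 0 < n ∧ n • x = 0}.Finite := by
  let _ : Module ℤ[X] A := Module.compHom A (aeval φ.toIntLinearMap).toRingHom
  have hX : ∀ x : A, (X : ℤ[X]) • x = φ x := fun x => by
    change aeval φ.toIntLinearMap X x = φ x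
    simp
  have hfin : (((ℤ[X] ∙ a) ⊓ addTorsionSubmodule ℤ[X] A : Submodule ℤ[X] A) : Set A).Finite := by
    by_contra hinf
    obtain ⟨p, hp, b, hb⟩ :=
      exists_prime_torsionOf_le_ker_of_infinite (Submodule.fg_span_singleton a) hinf
    have := Fact.mk hp
    exact hφ.elim (not_isInertial_of_torsionOf_le_ker hX hb) (not_isLIN_of_torsionOf_le_ker hX hb)
  refine hfin.subset fun x ⟨hx, hxt⟩ => Submodule.mem_inf.2 ⟨?_, ?_⟩
  · exact closure_range_iterate_le_span hX a hx
  · exact mem_addTorsionSubmodule.2 (isOfFinAddOrder_iff_nsmul_eq_zero.2 hxt)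
end
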